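/- arXiv:2004.04193 — 2 statements merged into one kernel-verified Lean document; each statement's English description precedes it below -/
import Mathlib

section
/- Let F : ℕ × ℝ → ℝ with F(n,·) continuously differentiable for each n, and let (u_n) be a sequence of non-negative reals with u_{n+1} - u_n ≤ F(n, u_n) for all n. Suppose there exist n₀ ∈ ℕ and A₁ > 0 such that F(n, x) < 0 for all n ≥ n₀ and x ≥ A₁, and there exists A₂ > 0 such that F(n, x) ≤ A₂ for all n ≥ n₀ and x ≥ 0. Then for all n ∈ ℕ, u_n ≤ max(max_{k ≤ n₀+1} u_k, A₁) + A₂. -/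
/-- Discrete comparison lemma. -/
theorem stmt_1 (F : ℕ → ℝ → ℝ) (u : ℕ → ℝ)
    (hF : ∀ n, ContDiff ℝ 1 (F n)) (hu : ∀ n, 0 ≤ u n)
    (hrec : ∀ n, u (n + 1) - u n ≤ F n (u n))
    (n₀ : ℕ) (A₁ A₂ : ℝ) (hA₁ : 0 < A₁) (hA₂ : 0 < A₂)
    (hneg : ∀ n, n₀ ≤ n → ∀ x : ℝ, A₁ ≤ x → F n x < 0)
    (hbd : ∀ n, n₀ ≤ n → ∀ x : ℝ, 0 ≤ x → F n x ≤ A₂) :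
    ∀ n, u n ≤ max ((Finset.range (n₀ + 2)).sup' (by simp) u) A₁ + A₂ := by
  set M := max ((Finset.range (n₀ + 2)).sup' (by simp) u) A₁ with hM
  have hsmall : ∀ n, n < n₀ + 2 → u n ≤ M := fun n hn =>
    le_trans (Finset.le_sup' u (Finset.mem_range.mpr hn)) (le_max_left _ _)
  intro n
  induction n with
  | zero => exact le_trans (hsmall 0 (by omega)) (le_add_of_nonneg_right hA₂.le)
  | succ n ih =>
    by_cases h : n + 1 < n₀ + 2
    · exact le_trans (hsmall _ h) (le_add_of_nonneg_right hA₂.le)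
    · have hn0 : n₀ ≤ n := by omega
      by_cases hc : u n ≤ A₁
      · have h1 : u (n+1) ≤ u n + F n (u n) := by linarith [hrec n]
        have h2 : F n (u n) ≤ A₂ := hbd n hn0 _ (hu n)
        have : A₁ ≤ M := le_max_right _ _
        linarith
      · have h3 : F n (u n) < 0 := hneg n hn0 _ (le_of_not_ge hc)
        linarith [hrec n]
end

section
/- Let f : ℝ^d → ℝ be convex C¹, satisfy a weak quasi-convexity/Łojasiewicz condition ‖∇f(x)‖^{r₁}·‖x−x*‖^{r₂} ≥ τ(f(x)−f(x*)) with r₁ = r₂ = 1. Then for any p ∈ ℕ with p ≥ 2 and any ℝ^d-valued random variable X with sufficient integrability, E[‖∇f(X)‖² (f(X)−f(x*))^{p−1}] ≥ E[(f(X)−f(x*))^p]^{1+1/p} · E[‖X−x*‖^{2p}]^{−1/p}. -/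
/-!
Condition F3 gives `F ≤ G H` pointwise, with `F = f(X) - f(x*)`, `G = ‖∇f(X)‖`, `H = ‖X - x*‖`.
Splitting `F ^ p = F ^ (2s) F ^ ((p-1)s)` with `s = p/(p+1)` therefore yields
`F ^ p ≤ (G² F ^ (p-1)) ^ s (H ^ (2p)) ^ (1-s)`, and Hölder's inequality with the conjugate
exponents `1/s = 1 + 1/p` and `1/(1-s) = p + 1` bounds `E[F ^ p]` by
`E[G² F ^ (p-1)] ^ s E[H ^ (2p)] ^ (1-s)`.
Raising to the power `1/s` and dividing by `E[H ^ (2p)] ^ (1/p)` is the claim.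
-/

open MeasureTheory

theorem pow_le_rpow_mul_rpow_of_le_mul {a b c : ℝ} (ha : 0 ≤ a) (hb : 0 ≤ b) (hc : 0 ≤ c)
    (habc : a ≤ b * c) {p : ℕ} (hp : 1 ≤ p) :
    a ^ p ≤ (b ^ 2 * a ^ (p - 1)) ^ ((p : ℝ) / (p + 1)) * (c ^ (2 * p)) ^ (1 / ((p : ℝ) + 1)) := by
  set s : ℝ := p / (p + 1)
  have hp0 : (0 : ℝ) < p := by exact_mod_cast hp
  have hexp : 2 * s + ((p : ℝ) - 1) * s = p := by simp only [s]; field_simp; ring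
  have hsplit : a ^ p = a ^ (2 * s) * a ^ (((p : ℝ) - 1) * s) := by
    rw [← Real.rpow_add' ha (by rw [hexp]; exact hp0.ne'), hexp, Real.rpow_natCast]
  have hleft : (b ^ 2 * a ^ (p - 1)) ^ s = b ^ (2 * s) * a ^ (((p : ℝ) - 1) * s) := by
    rw [Real.mul_rpow (by positivity) (by positivity), ← Real.rpow_natCast b 2,
      ← Real.rpow_natCast a (p - 1), ← Real.rpow_mul hb, ← Real.rpow_mul ha, Nat.cast_sub hp]
    norm_num
  have hright : (c ^ (2 * p)) ^ (1 / ((p : ℝ) + 1)) = c ^ (2 * s) := by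
    rw [← Real.rpow_natCast c (2 * p), ← Real.rpow_mul hc]
    congr 1
    push_cast
    ring
  calc a ^ p = a ^ (2 * s) * a ^ (((p : ℝ) - 1) * s) := hsplit
    _ ≤ (b * c) ^ (2 * s) * a ^ (((p : ℝ) - 1) * s) := by gcongr
    _ = (b ^ 2 * a ^ (p - 1)) ^ s * (c ^ (2 * p)) ^ (1 / ((p : ℝ) + 1)) := by
      rw [hleft, hright, Real.mul_rpow hb hc]
      ring

theorem integral_le_integral_rpow_mul_integral_rpow {α : Type*} [MeasurableSpace α]
    {μ : Measure α} {w u v : α → ℝ} {s t : ℝ} (hs : 0 ≤ s) (ht : 0 ≤ t) (hst : s + t = 1)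
    (hu : Integrable u μ) (hv : Integrable v μ) (hu0 : 0 ≤ᵐ[μ] u) (hv0 : 0 ≤ᵐ[μ] v)
    (hw0 : 0 ≤ᵐ[μ] w) (hw : ∀ᵐ a ∂μ, w a ≤ u a ^ s * v a ^ t) :
    ∫ a, w a ∂μ ≤ (∫ a, u a ∂μ) ^ s * (∫ a, v a ∂μ) ^ t := by
  have hU := integral_nonneg_of_ae hu0
  have hV := integral_nonneg_of_ae hv0
  rw [← ENNReal.ofReal_le_ofReal_iff (by positivity), ENNReal.ofReal_mul (by positivity),
    ← ENNReal.ofReal_rpow_of_nonneg hU hs, ← ENNReal.ofReal_rpow_of_nonneg hV ht,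
    ofReal_integral_eq_lintegral_ofReal hu hu0, ofReal_integral_eq_lintegral_ofReal hv hv0]
  calc ENNReal.ofReal (∫ a, w a ∂μ)
      ≤ ∫⁻ a, ENNReal.ofReal (w a) ∂μ := by
        by_cases hwi : Integrable w μ
        · exact (ofReal_integral_eq_lintegral_ofReal hwi hw0).le
        · simp [integral_undef hwi]
    _ ≤ ∫⁻ a, ENNReal.ofReal (u a) ^ s * ENNReal.ofReal (v a) ^ t ∂μ := by
        refine lintegral_mono_ae ?_
        filter_upwards [hu0, hv0, hw] with a hua hva hwa
        rw [ENNReal.ofReal_rpow_of_nonneg hua hs, ENNReal.ofReal_rpow_of_nonneg hva ht,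
          ← ENNReal.ofReal_mul (Real.rpow_nonneg hua s)]
        exact ENNReal.ofReal_le_ofReal hwa
    _ ≤ _ := ENNReal.lintegral_mul_norm_pow_le hu.aemeasurable.ennreal_ofReal
        hv.aemeasurable.ennreal_ofReal hs ht hst

theorem rpow_one_add_inv_mul_rpow_neg_le {I A B q : ℝ} (hq : 0 < q) (hI : 0 ≤ I) (hA : 0 ≤ A)
    (hB : 0 ≤ B) (h : I ≤ A ^ (q / (q + 1)) * B ^ (1 / (q + 1))) :
    I ^ (1 + 1 / q) * B ^ (-1 / q) ≤ A := by
  -- `0 ^ x = 0` for `x ≠ 0`, so the left side vanishes when `B = 0`.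
  rcases hB.eq_or_lt with rfl | hB
  · rw [Real.zero_rpow (by positivity), mul_zero]
    exact hA
  have hraise : I ^ (1 + 1 / q) ≤ A * B ^ (1 / q) := by
    calc I ^ (1 + 1 / q) ≤ (A ^ (q / (q + 1)) * B ^ (1 / (q + 1))) ^ (1 + 1 / q) := by gcongr
      _ = A * B ^ (1 / q) := by
        rw [Real.mul_rpow (by positivity) (by positivity), ← Real.rpow_mul hA,
          ← Real.rpow_mul hB.le]
        field_simp
        rw [Real.rpow_one]
  calc I ^ (1 + 1 / q) * B ^ (-1 / q) ≤ A * B ^ (1 / q) * B ^ (-1 / q) := by gcongr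
    _ = A := by rw [mul_assoc, ← Real.rpow_add hB, ← add_div, add_neg_cancel, zero_div,
      Real.rpow_zero, mul_one]

theorem stmt_13_general {d : ℕ} (f : EuclideanSpace ℝ (Fin d) → ℝ)
    (xstar : EuclideanSpace ℝ (Fin d)) (hmin : ∀ x, f xstar ≤ f x)
    (hF3 : ∀ x, f x - f xstar ≤ ‖gradient f x‖ * ‖x - xstar‖)
    (p : ℕ) (hp : 2 ≤ p)
    {Ω : Type*} [MeasurableSpace Ω] (P : Measure Ω)
    (X : Ω → EuclideanSpace ℝ (Fin d))
    (hint1 : Integrable (fun ω => ‖gradient f (X ω)‖ ^ 2 * (f (X ω) - f xstar) ^ (p - 1)) P)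
    (hint3 : Integrable (fun ω => ‖X ω - xstar‖ ^ (2 * p)) P) :
    (∫ ω, (f (X ω) - f xstar) ^ p ∂P) ^ ((1 : ℝ) + 1 / (p : ℝ)) *
      (∫ ω, ‖X ω - xstar‖ ^ (2 * p) ∂P) ^ (-(1 : ℝ) / (p : ℝ)) ≤
      ∫ ω, ‖gradient f (X ω)‖ ^ 2 * (f (X ω) - f xstar) ^ (p - 1) ∂P := by
  have hp1 : 1 ≤ p := by omega
  have hgap : ∀ x, 0 ≤ f x - f xstar := fun x => sub_nonneg.2 (hmin x)
  have hweighted : ∀ ω, 0 ≤ ‖gradient f (X ω)‖ ^ 2 * (f (X ω) - f xstar) ^ (p - 1) :=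
    fun ω => mul_nonneg (by positivity) (pow_nonneg (hgap (X ω)) _)
  have hholder := integral_le_integral_rpow_mul_integral_rpow
    (s := (p : ℝ) / (p + 1)) (t := 1 / ((p : ℝ) + 1)) (by positivity) (by positivity)
    (by field_simp) hint1 hint3 (.of_forall hweighted) (.of_forall fun ω => by positivity)
    (.of_forall fun ω => pow_nonneg (hgap (X ω)) p)
    (.of_forall fun ω => pow_le_rpow_mul_rpow_of_le_mul (hgap (X ω)) (norm_nonneg _)
      (norm_nonneg _) (hF3 (X ω)) hp1)
  exact rpow_one_add_inv_mul_rpow_neg_le (by exact_mod_cast hp1)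
    (integral_nonneg fun ω => pow_nonneg (hgap (X ω)) p) (integral_nonneg hweighted)
    (integral_nonneg fun ω => by positivity) hholder

/-- Hölder-type lower bound under weak quasi-convexity with `r₁ = r₂ = 1`:
`E[‖∇f(X)‖² (f(X)−f*)^{p−1}] ≥ E[(f(X)−f*)^p]^{1+1/p} E[‖X−x*‖^{2p}]^{−1/p}`. -/
theorem stmt_13 {d : ℕ} (f : EuclideanSpace ℝ (Fin d) → ℝ)
    (hconv : ConvexOn ℝ Set.univ f) (hf : ContDiff ℝ 1 f)
    (xstar : EuclideanSpace ℝ (Fin d)) (hmin : ∀ x, f xstar ≤ f x)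
    (hF3 : ∀ x, f x - f xstar ≤ ‖gradient f x‖ * ‖x - xstar‖)
    (p : ℕ) (hp : 2 ≤ p)
    {Ω : Type*} [MeasurableSpace Ω] (P : Measure Ω) [IsProbabilityMeasure P]
    (X : Ω → EuclideanSpace ℝ (Fin d)) (hX : AEStronglyMeasurable X P)
    (hint1 : Integrable (fun ω => ‖gradient f (X ω)‖ ^ 2 * (f (X ω) - f xstar) ^ (p - 1)) P)
    (hint2 : Integrable (fun ω => (f (X ω) - f xstar) ^ p) P)
    (hint3 : Integrable (fun ω => ‖X ω - xstar‖ ^ (2 * p)) P)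
    (hpos : 0 < ∫ ω, ‖X ω - xstar‖ ^ (2 * p) ∂P) :
    (∫ ω, (f (X ω) - f xstar) ^ p ∂P) ^ ((1 : ℝ) + 1 / (p : ℝ)) *
      (∫ ω, ‖X ω - xstar‖ ^ (2 * p) ∂P) ^ (-(1 : ℝ) / (p : ℝ)) ≤
      ∫ ω, ‖gradient f (X ω)‖ ^ 2 * (f (X ω) - f xstar) ^ (p - 1) ∂P :=
  stmt_13_general f xstar hmin hF3 p hp P X hint1 hint3
end
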